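/- arXiv:2209.14587 — 2 statements merged into one kernel-verified Lean document; each statement's English description precedes it below -/
import Mathlib

section
/- With T ~ Weibull(θ,β) and C ~ Weibull(θ,α) independent with common shape θ, the joint density of (Y,Δ) = (min(T,C), I(T≤C)) factorizes as p(y,δ) = φ^δ(1−φ)^{1−δ} · p_W(y | k, λ), where φ = α^θ/(α^θ + β^θ), k = θ, and λ = β/(1 + (β/α)^θ)^{1/θ}; i.e., Δ is Bernoulli(φ), Y is Weibull(k,λ), and Y and Δ are independent. -/
open Real MeasureTheory ProbabilityTheory

/-- Weibull density with shape `k` and scale `lam`, extended by `0` off `(0,∞)`. -/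
noncomputable def weibullPDF (k lam t : ℝ) : ℝ :=
  if 0 < t then (k / lam ^ k) * t ^ (k - 1) * Real.exp (-(t / lam) ^ k) else 0

/-!
By independence, `P(min T C ∈ A, T ≤ C) = ∫_A S_α dP_T` and `P(min T C ∈ A, C < T) = ∫_A S_β dP_C`,
where `S_s t = exp (-(t/s)^θ)` is the Weibull survival function. With a common shape the
hazards add, `(t/λ)^θ = (t/α)^θ + (t/β)^θ`, so `S_α f_β = φ f_λ` and `S_β f_α = (1 - φ) f_λ`.
Both joint probabilities are therefore constant multiples of the Weibull`(θ, λ)` mass of `A`: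
summing them gives the law of `Y`, taking `A = ℝ` gives the law of `Δ`, and the product form is
the independence of `Y` and `Δ`.
-/

open Set Filter Topology
open scoped ENNReal

namespace ProbabilityTheory

variable {Ω : Type*} [MeasurableSpace Ω] {μ : Measure Ω}

lemma indepFun_indicator_of_measure_inter_eq_mul {β M : Type*} [IsZeroOrProbabilityMeasure μ]
    [MeasurableSpace β] [Zero M] [MeasurableSpace M] {Y : Ω → β} {E : Set Ω}
    (hY : Measurable Y) (hE : MeasurableSet E) (c : M)
    (h : ∀ s, MeasurableSet s → μ (Y ⁻¹' s ∩ E) = μ (Y ⁻¹' s) * μ E) :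
    IndepFun Y (E.indicator fun _ => c) μ := by
  have hindep : Indep (MeasurableSpace.generateFrom {E}) (MeasurableSpace.comap Y ‹_›) μ := by
    rw [MeasurableSpace.comap_eq_generateFrom]
    refine IndepSets.indep' ?_ ?_ (IsPiSystem.singleton E) ?_ ?_
    · simpa using hE
    · rintro _ ⟨s, hs, rfl⟩
      exact hY hs
    · exact MeasurableSpace.isPiSystem_measurableSet.comap Y
    · rw [IndepSets_iff]
      rintro _ _ rfl ⟨s, hs, rfl⟩
      rw [inter_comm, h s hs, mul_comm]
  exact (hindep.indicator_indepFun c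
    (MeasurableSpace.measurableSet_generateFrom (mem_singleton E))).symm

lemma IndepFun.measure_preimage_eq_lintegral {α β : Type*} [MeasurableSpace α]
    [MeasurableSpace β] [IsFiniteMeasure μ] {X : Ω → α} {Y : Ω → β} (hXY : IndepFun X Y μ)
    (hX : Measurable X) (hY : Measurable Y) {S : Set (α × β)} (hS : MeasurableSet S) :
    μ ((fun ω => (X ω, Y ω)) ⁻¹' S) = ∫⁻ x, μ.map Y (Prod.mk x ⁻¹' S) ∂μ.map X := by
  rw [← Measure.map_apply (hX.prodMk hY) hS,
    (indepFun_iff_map_prod_eq_prod_map_map hX.aemeasurable hY.aemeasurable).mp hXY,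
    Measure.prod_apply hS]

variable [IsFiniteMeasure μ] {X Y : Ω → ℝ}

lemma IndepFun.measure_preimage_inter_le (hXY : IndepFun X Y μ) (hX : Measurable X)
    (hY : Measurable Y) {A : Set ℝ} (hA : MeasurableSet A) :
    μ (X ⁻¹' A ∩ {ω | X ω ≤ Y ω}) = ∫⁻ x in A, μ.map Y (Ici x) ∂μ.map X := by
  have hS : MeasurableSet {p : ℝ × ℝ | p.1 ∈ A ∧ p.1 ≤ p.2} :=
    (measurable_fst hA).inter (measurableSet_le measurable_fst measurable_snd)
  rw [← lintegral_indicator hA]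
  convert hXY.measure_preimage_eq_lintegral hX hY hS using 3 with x
  · rfl
  · by_cases hx : x ∈ A <;> simp [hx, Ici]

lemma IndepFun.measure_preimage_inter_lt (hXY : IndepFun X Y μ) (hX : Measurable X)
    (hY : Measurable Y) {A : Set ℝ} (hA : MeasurableSet A) :
    μ (X ⁻¹' A ∩ {ω | X ω < Y ω}) = ∫⁻ x in A, μ.map Y (Ioi x) ∂μ.map X := by
  have hS : MeasurableSet {p : ℝ × ℝ | p.1 ∈ A ∧ p.1 < p.2} :=
    (measurable_fst hA).inter (measurableSet_lt measurable_fst measurable_snd)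
  rw [← lintegral_indicator hA]
  convert hXY.measure_preimage_eq_lintegral hX hY hS using 3 with x
  · rfl
  · by_cases hx : x ∈ A <;> simp [hx, Ioi]

end ProbabilityTheory

lemma map_eq_of_measure_preimage_inter_eq_mul {Ω β : Type*} [MeasurableSpace Ω]
    [MeasurableSpace β] {μ : Measure Ω} {ν : Measure β} {Y : Ω → β} {E : Set Ω} {p q : ℝ≥0∞}
    (hY : Measurable Y) (hE : MeasurableSet E) (hpq : p + q = 1)
    (hinter : ∀ A, MeasurableSet A → μ (Y ⁻¹' A ∩ E) = p * ν A)
    (hsdiff : ∀ A, MeasurableSet A → μ (Y ⁻¹' A \ E) = q * ν A) :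
    μ.map Y = ν := by
  ext A hA
  rw [Measure.map_apply hY hA, ← measure_inter_add_sdiff _ hE, hinter A hA, hsdiff A hA,
    ← add_mul, hpq, one_mul]

lemma preimage_min_inter_le {Ω α : Type*} [LinearOrder α] (f g : Ω → α) (A : Set α) :
    (fun ω => min (f ω) (g ω)) ⁻¹' A ∩ {ω | f ω ≤ g ω} = f ⁻¹' A ∩ {ω | f ω ≤ g ω} := by
  ext ω
  simp +contextual

lemma preimage_min_sdiff_le {Ω α : Type*} [LinearOrder α] (f g : Ω → α) (A : Set α) :
    (fun ω => min (f ω) (g ω)) ⁻¹' A \ {ω | f ω ≤ g ω} = g ⁻¹' A ∩ {ω | g ω < f ω} := by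
  ext ω
  simp +contextual [min_eq_right_of_lt]

noncomputable def weibullSurvival (k lam t : ℝ) : ℝ := Real.exp (-(t / lam) ^ k)

noncomputable def weibullMeasure (k lam : ℝ) : Measure ℝ :=
  volume.withDensity fun t => ENNReal.ofReal (weibullPDF k lam t)

section Weibull

variable {k lam : ℝ}

lemma measurable_weibullPDF (k lam : ℝ) : Measurable (weibullPDF k lam) :=
  Measurable.ite measurableSet_Ioi (by fun_prop) measurable_const

lemma weibullPDF_of_nonpos {t : ℝ} (ht : t ≤ 0) : weibullPDF k lam t = 0 :=
  if_neg ht.not_gt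

lemma weibullPDF_nonneg (hk : 0 ≤ k) (hlam : 0 ≤ lam) (t : ℝ) : 0 ≤ weibullPDF k lam t := by
  unfold weibullPDF
  split_ifs <;> positivity

lemma hasDerivAt_weibullSurvival (hlam : 0 < lam) {t : ℝ} (ht : 0 < t) :
    HasDerivAt (weibullSurvival k lam) (-weibullPDF k lam t) t := by
  have hdiv : HasDerivAt (fun c : ℝ => c / lam) (1 / lam) t := by
    simpa using (hasDerivAt_id t).div_const lam
  have hpow := hdiv.rpow_const (p := k) (Or.inl (div_pos ht hlam).ne')
  refine hpow.neg.exp.congr_deriv ?_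
  have hlam_pow : lam ^ (k - 1) * lam = lam ^ k := by
    rw [← Real.rpow_add_one hlam.ne', sub_add_cancel]
  rw [weibullPDF, if_pos ht, Pi.neg_apply, Real.div_rpow ht.le hlam.le (k - 1), ← hlam_pow]
  field_simp

lemma tendsto_weibullSurvival_atTop (hk : 0 < k) (hlam : 0 < lam) :
    Tendsto (weibullSurvival k lam) atTop (𝓝 0) :=
  Real.tendsto_exp_atBot.comp <| tendsto_neg_atTop_atBot.comp <|
    (tendsto_rpow_atTop hk).comp (tendsto_id.atTop_div_const hlam)

lemma weibullMeasure_Ioi (hk : 0 < k) (hlam : 0 < lam) {t : ℝ} (ht : 0 < t) :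
    weibullMeasure k lam (Ioi t) = ENNReal.ofReal (weibullSurvival k lam t) := by
  have hderiv : ∀ x ∈ Ici t, HasDerivAt (-weibullSurvival k lam) (weibullPDF k lam x) x :=
    fun x hx => by simpa using (hasDerivAt_weibullSurvival hlam (ht.trans_le hx)).neg
  have hnonneg : ∀ x ∈ Ioi t, 0 ≤ weibullPDF k lam x :=
    fun x _ => weibullPDF_nonneg hk.le hlam.le x
  have hlim := (tendsto_weibullSurvival_atTop hk hlam).neg
  rw [neg_zero] at hlim
  rw [weibullMeasure, withDensity_apply _ measurableSet_Ioi,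
    ← ofReal_integral_eq_lintegral_ofReal
      (integrableOn_Ioi_deriv_of_nonneg' hderiv hnonneg hlim)
      (ae_restrict_of_forall_mem measurableSet_Ioi hnonneg),
    integral_Ioi_of_hasDerivAt_of_nonneg' hderiv hnonneg hlim, zero_sub, Pi.neg_apply, neg_neg]

instance (k lam : ℝ) : NullSingletonClass (weibullMeasure k lam) :=
  nullSingletonClass_withDensity _

lemma weibullMeasure_Ici (hk : 0 < k) (hlam : 0 < lam) {t : ℝ} (ht : 0 < t) :
    weibullMeasure k lam (Ici t) = ENNReal.ofReal (weibullSurvival k lam t) := by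
  rw [← measure_congr Ioi_ae_eq_Ici, weibullMeasure_Ioi hk hlam ht]

lemma ae_pos_weibullMeasure : ∀ᵐ t ∂weibullMeasure k lam, 0 < t :=
  (ae_withDensity_iff (measurable_weibullPDF k lam).ennreal_ofReal).2 <|
    Eventually.of_forall fun t ht => by_contra fun h => ht <| by
      rw [weibullPDF_of_nonpos (not_lt.1 h), ENNReal.ofReal_zero]

variable {a b : ℝ}

lemma weibullSurvival_mul_weibullPDF (hk : 0 < k) (ha : 0 < a) (hb : 0 < b) (hlam : 0 < lam)
    (hhaz : (lam ^ k)⁻¹ = (a ^ k)⁻¹ + (b ^ k)⁻¹) (t : ℝ) :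
    weibullSurvival k a t * weibullPDF k b t = (lam / b) ^ k * weibullPDF k lam t := by
  rcases le_or_gt t 0 with ht | ht
  · simp [weibullPDF_of_nonpos ht]
  have hsum : (t / lam) ^ k = (t / a) ^ k + (t / b) ^ k := by
    rw [Real.div_rpow ht.le ha.le, Real.div_rpow ht.le hb.le, Real.div_rpow ht.le hlam.le,
      div_eq_mul_inv, hhaz]
    ring
  have : 0 < lam ^ k := rpow_pos_of_pos hlam k
  rw [weibullSurvival, weibullPDF, if_pos ht, weibullPDF, if_pos ht, hsum, neg_add,
    Real.exp_add, Real.div_rpow hlam.le hb.le]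
  field_simp

lemma setLIntegral_weibullSurvival (hk : 0 < k) (ha : 0 < a) (hb : 0 < b) (hlam : 0 < lam)
    (hhaz : (lam ^ k)⁻¹ = (a ^ k)⁻¹ + (b ^ k)⁻¹) {A : Set ℝ} (hA : MeasurableSet A) :
    ∫⁻ t in A, ENNReal.ofReal (weibullSurvival k a t) ∂weibullMeasure k b
      = ENNReal.ofReal ((lam / b) ^ k) * weibullMeasure k lam A := by
  have hprod : ∀ t, ENNReal.ofReal (weibullPDF k b t) * ENNReal.ofReal (weibullSurvival k a t)
      = ENNReal.ofReal ((lam / b) ^ k) * ENNReal.ofReal (weibullPDF k lam t) := fun t => by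
    rw [← ENNReal.ofReal_mul (weibullPDF_nonneg hk.le hb.le t), mul_comm,
      weibullSurvival_mul_weibullPDF hk ha hb hlam hhaz,
      ENNReal.ofReal_mul (rpow_nonneg (div_pos hlam hb).le k)]
  rw [weibullMeasure, setLIntegral_withDensity_eq_setLIntegral_mul _
      (measurable_weibullPDF k b).ennreal_ofReal (by unfold weibullSurvival; fun_prop) hA]
  simp only [Pi.mul_apply, hprod]
  rw [lintegral_const_mul _ (measurable_weibullPDF k lam).ennreal_ofReal,
    weibullMeasure, withDensity_apply _ hA]

lemma setLIntegral_weibullMeasure_of_eq_weibullSurvival (hk : 0 < k) (ha : 0 < a) (hb : 0 < b)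
    (hlam : 0 < lam) (hhaz : (lam ^ k)⁻¹ = (a ^ k)⁻¹ + (b ^ k)⁻¹) {F : ℝ → ℝ≥0∞}
    (hF : ∀ t, 0 < t → F t = ENNReal.ofReal (weibullSurvival k a t))
    {A : Set ℝ} (hA : MeasurableSet A) :
    ∫⁻ t in A, F t ∂weibullMeasure k b
      = ENNReal.ofReal ((lam / b) ^ k) * weibullMeasure k lam A := by
  rw [setLIntegral_congr_fun_ae hA (ae_pos_weibullMeasure.mono fun t ht _ => hF t ht),
    setLIntegral_weibullSurvival hk ha hb hlam hhaz hA]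

lemma inv_rpow_weibull_min_scale {θ α β : ℝ} (hθ : 0 < θ) (hα : 0 < α) (hβ : 0 < β) :
    ((β / (1 + (β / α) ^ θ) ^ (1 / θ)) ^ θ)⁻¹ = (α ^ θ)⁻¹ + (β ^ θ)⁻¹ := by
  have hbase : 0 < 1 + (β / α) ^ θ := by positivity
  rw [Real.div_rpow hβ.le (by positivity), ← Real.rpow_mul hbase.le, one_div_mul_cancel hθ.ne',
    Real.rpow_one, Real.div_rpow hβ.le hα.le]
  have : 0 < α ^ θ := by positivity
  have : 0 < β ^ θ := by positivity
  field_simp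
  ring

lemma div_rpow_add_div_rpow_eq_one (ha : 0 ≤ a) (hb : 0 ≤ b) (hlam : 0 < lam)
    (hhaz : (lam ^ k)⁻¹ = (a ^ k)⁻¹ + (b ^ k)⁻¹) :
    (lam / a) ^ k + (lam / b) ^ k = 1 := by
  rw [Real.div_rpow hlam.le ha, Real.div_rpow hlam.le hb, div_eq_mul_inv, div_eq_mul_inv,
    ← mul_add, ← hhaz, mul_inv_cancel₀ (rpow_pos_of_pos hlam k).ne']

lemma div_rpow_eq_of_inv_rpow_eq_add (ha : 0 < a) (hb : 0 < b) (hlam : 0 ≤ lam)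
    (hhaz : (lam ^ k)⁻¹ = (a ^ k)⁻¹ + (b ^ k)⁻¹) :
    (lam / b) ^ k = a ^ k / (a ^ k + b ^ k) := by
  have : 0 < a ^ k := by positivity
  have : 0 < b ^ k := by positivity
  rw [Real.div_rpow hlam hb.le, ← inv_inv (lam ^ k), hhaz]
  field_simp
  ring

end Weibull

section CompetingRisks

variable {Ω : Type*} [MeasurableSpace Ω] {μ : Measure Ω} [IsFiniteMeasure μ] {T C : Ω → ℝ}
  {k a b lam : ℝ}

lemma measure_preimage_min_inter_le_of_weibull (hk : 0 < k) (ha : 0 < a) (hb : 0 < b)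
    (hlam : 0 < lam) (hhaz : (lam ^ k)⁻¹ = (a ^ k)⁻¹ + (b ^ k)⁻¹) (hTC : IndepFun T C μ)
    (hT : Measurable T) (hC : Measurable C) (hTlaw : μ.map T = weibullMeasure k b)
    (hClaw : μ.map C = weibullMeasure k a) {A : Set ℝ} (hA : MeasurableSet A) :
    μ ((fun ω => min (T ω) (C ω)) ⁻¹' A ∩ {ω | T ω ≤ C ω})
      = ENNReal.ofReal ((lam / b) ^ k) * weibullMeasure k lam A := by
  rw [preimage_min_inter_le, hTC.measure_preimage_inter_le hT hC hA, hTlaw, hClaw,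
    setLIntegral_weibullMeasure_of_eq_weibullSurvival hk ha hb hlam hhaz
      (fun t ht => weibullMeasure_Ici hk ha ht) hA]

lemma measure_preimage_min_sdiff_le_of_weibull (hk : 0 < k) (ha : 0 < a) (hb : 0 < b)
    (hlam : 0 < lam) (hhaz : (lam ^ k)⁻¹ = (a ^ k)⁻¹ + (b ^ k)⁻¹) (hTC : IndepFun T C μ)
    (hT : Measurable T) (hC : Measurable C) (hTlaw : μ.map T = weibullMeasure k b)
    (hClaw : μ.map C = weibullMeasure k a) {A : Set ℝ} (hA : MeasurableSet A) :
    μ ((fun ω => min (T ω) (C ω)) ⁻¹' A \ {ω | T ω ≤ C ω})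
      = ENNReal.ofReal ((lam / a) ^ k) * weibullMeasure k lam A := by
  rw [preimage_min_sdiff_le, hTC.symm.measure_preimage_inter_lt hC hT hA, hTlaw, hClaw,
    setLIntegral_weibullMeasure_of_eq_weibullSurvival hk hb ha hlam (by rwa [add_comm])
      (fun t ht => weibullMeasure_Ioi hk hb ht) hA]

end CompetingRisks

theorem weibull_min_indicator_factorization
    {Ω : Type*} [MeasurableSpace Ω] (μ : Measure Ω) [IsProbabilityMeasure μ]
    (θ α β : ℝ) (hθ : 0 < θ) (hα : 0 < α) (hβ : 0 < β)
    (T C : Ω → ℝ) (hT : Measurable T) (hC : Measurable C)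
    (hTC : IndepFun T C μ)
    (hTlaw : μ.map T = volume.withDensity fun t => ENNReal.ofReal (weibullPDF θ β t))
    (hClaw : μ.map C = volume.withDensity fun t => ENNReal.ofReal (weibullPDF θ α t))
    (Y : Ω → ℝ) (hY : Y = fun ω => min (T ω) (C ω))
    (Δ : Ω → ℕ) (hΔ : Δ = fun ω => if T ω ≤ C ω then 1 else 0)
    (φ k lam : ℝ) (hφ : φ = α ^ θ / (α ^ θ + β ^ θ)) (hk : k = θ)
    (hlam : lam = β / (1 + (β / α) ^ θ) ^ (1 / θ)) :
    IndepFun Y Δ μ ∧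
      μ.map Y = volume.withDensity (fun t => ENNReal.ofReal (weibullPDF k lam t)) ∧
      μ {ω | Δ ω = 1} = ENNReal.ofReal φ ∧
      μ {ω | Δ ω = 0} = ENNReal.ofReal (1 - φ) := by
  subst hk hY hΔ
  change μ.map T = weibullMeasure k β at hTlaw
  change μ.map C = weibullMeasure k α at hClaw
  set E := {ω | T ω ≤ C ω}
  have hE : MeasurableSet E := measurableSet_le hT hC
  have hlam0 : 0 < lam := by rw [hlam]; positivity
  have hhaz : (lam ^ k)⁻¹ = (α ^ k)⁻¹ + (β ^ k)⁻¹ := hlam ▸ inv_rpow_weibull_min_scale hθ hα hβ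
  have hφβ : (lam / β) ^ k = φ := by rw [hφ, div_rpow_eq_of_inv_rpow_eq_add hα hβ hlam0.le hhaz]
  have hφα : (lam / α) ^ k = 1 - φ := by
    rw [← hφβ, ← div_rpow_add_div_rpow_eq_one hα.le hβ.le hlam0 hhaz, add_sub_cancel_right]
  have hinter := fun A (hA : MeasurableSet A) => hφβ ▸
    measure_preimage_min_inter_le_of_weibull hθ hα hβ hlam0 hhaz hTC hT hC hTlaw hClaw hA
  have hsdiff := fun A (hA : MeasurableSet A) => hφα ▸
    measure_preimage_min_sdiff_le_of_weibull hθ hα hβ hlam0 hhaz hTC hT hC hTlaw hClaw hA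
  have hφ1 : ENNReal.ofReal φ + ENNReal.ofReal (1 - φ) = 1 := by
    rw [← ENNReal.ofReal_add (hφβ ▸ by positivity) (hφα ▸ by positivity), add_sub_cancel,
      ENNReal.ofReal_one]
  have hlaw := map_eq_of_measure_preimage_inter_eq_mul (hT.min hC) hE hφ1 hinter hsdiff
  have : IsProbabilityMeasure (weibullMeasure k lam) :=
    hlaw ▸ Measure.isProbabilityMeasure_map (hT.min hC).aemeasurable
  have hμE : μ E = ENNReal.ofReal φ := by simpa using hinter univ .univ
  have hμEc : μ Eᶜ = ENNReal.ofReal (1 - φ) := by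
    simpa [compl_eq_univ_sdiff] using hsdiff univ .univ
  have hΔE : (fun ω => if T ω ≤ C ω then 1 else 0) = E.indicator fun _ => 1 := by
    ext ω
    simp [E, indicator_apply]
  refine ⟨?_, hlaw, by simpa [E] using hμE, by simpa [E, compl_ofPred] using hμEc⟩
  rw [hΔE]
  refine indepFun_indicator_of_measure_inter_eq_mul (hT.min hC) hE 1 fun A hA => ?_
  rw [hinter A hA, hμE, ← Measure.map_apply (hT.min hC) hA, hlaw, mul_comm]
end

section
/- Under type I censoring at time c > 0, the KL divergence between Exponential(λ₀) and Exponential(λ₁), defined as the KL divergence of the joint laws of (min(T,c), I(T≤c)), equals (1 − exp(−c/λ₀))·(λ₀/λ₁ + log(λ₁/λ₀) − 1). -/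
/-!
The log-likelihood ratio of two exponential densities is affine in `t`, so the uncensored part
of the divergence is a combination of the truncated mass `1 - exp (-c / λ₀)` and the truncated
first moment `λ₀ - (c + λ₀) exp (-c / λ₀)`. The atom at `c` contributes `exp (-c / λ₀)` times
`c (1 / λ₁ - 1 / λ₀)`, which cancels the `c exp (-c / λ₀)` term of the first moment.
-/

open Real MeasureTheory

theorem hasDerivAt_exp_neg_div (lam t : ℝ) :
    HasDerivAt (fun t => exp (-t / lam)) (-(exp (-t / lam) / lam)) t := by
  have hinner : HasDerivAt (fun t => -t / lam) (-1 / lam) t := by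
    simpa using (hasDerivAt_id t).neg.div_const lam
  convert hinner.exp using 1
  ring

theorem log_ratio_exp_neg_div_div {a b : ℝ} (ha : 0 < a) (hb : 0 < b) (t : ℝ) :
    log ((exp (-t / a) / a) / (exp (-t / b) / b)) = log (b / a) + (1 / b - 1 / a) * t := by
  rw [log_div (by positivity) (by positivity), log_div (exp_ne_zero _) ha.ne',
    log_div (exp_ne_zero _) hb.ne', log_exp, log_exp, log_div hb.ne' ha.ne']
  ring

theorem integral_exp_neg_div_div (lam c : ℝ) :
    ∫ t in (0 : ℝ)..c, exp (-t / lam) / lam = 1 - exp (-c / lam) := by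
  have hderiv : ∀ t ∈ Set.uIcc (0 : ℝ) c,
      HasDerivAt (fun t => -exp (-t / lam)) (exp (-t / lam) / lam) t := fun t _ => by
    simpa using (hasDerivAt_exp_neg_div lam t).fun_neg
  rw [intervalIntegral.integral_eq_sub_of_hasDerivAt hderiv
    ((by fun_prop : Continuous _).intervalIntegrable _ _)]
  simp only [neg_zero, zero_div, exp_zero]
  ring

theorem integral_mul_exp_neg_div_div {lam : ℝ} (hlam : lam ≠ 0) (c : ℝ) :
    ∫ t in (0 : ℝ)..c, t * (exp (-t / lam) / lam) = lam - (c + lam) * exp (-c / lam) := by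
  have hderiv : ∀ t ∈ Set.uIcc (0 : ℝ) c,
      HasDerivAt (fun t => -((t + lam) * exp (-t / lam))) (t * (exp (-t / lam) / lam)) t :=
    fun t _ => by
      refine (((hasDerivAt_id' t).add_const lam).fun_mul
        (hasDerivAt_exp_neg_div lam t)).fun_neg.congr_deriv ?_
      field_simp
      ring
  rw [intervalIntegral.integral_eq_sub_of_hasDerivAt hderiv
    ((by fun_prop : Continuous _).intervalIntegrable _ _)]
  simp only [neg_zero, zero_div, exp_zero]
  ring

theorem exponential_typeI_censored_kl (c lam₀ lam₁ : ℝ) (hc : 0 < c)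
    (h₀ : 0 < lam₀) (h₁ : 0 < lam₁) :
    (∫ t in Set.Ioo (0 : ℝ) c,
        (Real.exp (-t / lam₀) / lam₀) *
          Real.log ((Real.exp (-t / lam₀) / lam₀) / (Real.exp (-t / lam₁) / lam₁))) +
      Real.exp (-c / lam₀) * Real.log (Real.exp (-c / lam₀) / Real.exp (-c / lam₁)) =
    (1 - Real.exp (-c / lam₀)) * (lam₀ / lam₁ + Real.log (lam₁ / lam₀) - 1) := by
  set A := log (lam₁ / lam₀)
  set B := 1 / lam₁ - 1 / lam₀
  have hintegrand (t : ℝ) :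
      exp (-t / lam₀) / lam₀ * log ((exp (-t / lam₀) / lam₀) / (exp (-t / lam₁) / lam₁)) =
        A * (exp (-t / lam₀) / lam₀) + B * (t * (exp (-t / lam₀) / lam₀)) := by
    rw [log_ratio_exp_neg_div_div h₀ h₁]
    ring
  have huncensored : ∫ t in Set.Ioo (0 : ℝ) c,
      exp (-t / lam₀) / lam₀ * log ((exp (-t / lam₀) / lam₀) / (exp (-t / lam₁) / lam₁)) =
        A * (1 - exp (-c / lam₀)) + B * (lam₀ - (c + lam₀) * exp (-c / lam₀)) := by
    rw [← integral_Ioc_eq_integral_Ioo, ← intervalIntegral.integral_of_le hc.le]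
    simp only [hintegrand]
    rw [intervalIntegral.integral_add
      ((by fun_prop : Continuous _).intervalIntegrable _ _)
      ((by fun_prop : Continuous _).intervalIntegrable _ _),
      intervalIntegral.integral_const_mul, intervalIntegral.integral_const_mul,
      integral_exp_neg_div_div, integral_mul_exp_neg_div_div h₀.ne']
  have hatom : log (exp (-c / lam₀) / exp (-c / lam₁)) = B * c := by
    rw [log_div (exp_ne_zero _) (exp_ne_zero _), log_exp, log_exp]
    ring
  rw [huncensored, hatom]
  simp only [B]
  field_simp
  ring
end
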